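/- For n variables x₁,…,xₙ and parameters t₁,…,tₙ with β such that all 1 + βtᵢ are invertible, the determinant det[(x_j|t)^{n-i}]_{1≤i,j≤n} equals Δ(x) · ∏_{i=1}^{n} (1 + βt_i)^{n-i}, where Δ(x) = ∏_{i<j}(x_i - x_j) is the Vandermonde determinant and (x|t)^r := ∏_{i=1}^{r}(x ⊕ t_i) with x ⊕ t = x + t + βxt. -/
import Mathlib


open Finset Matrix

/-- β-deformed factorial power `(x|t)^r = ∏_{i=1}^r (x ⊕ t_i)` where
`x ⊕ t = x + t + β*x*t` and `t i` (0-based) denotes `t_{i+1}`. -/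
noncomputable def facPow {K : Type*} [CommRing K] (β : K) (t : ℕ → K) (x : K) (r : ℕ) : K :=
  ∏ i ∈ Finset.range r, (x + t i + β * x * t i)

open Polynomial in
/-- The polynomial whose evaluation at `x` is `facPow β t x r`. -/
noncomputable def fvPoly {K : Type*} [CommRing K] (β : K) (t : ℕ → K) (r : ℕ) : K[X] :=
  ∏ j ∈ Finset.range r, (C (1 + β * t j) * X + C (t j))

open Polynomial in
lemma fvPoly_eval {K : Type*} [CommRing K] (β : K) (t : ℕ → K) (x : K) (r : ℕ) :
    (fvPoly β t r).eval x = facPow β t x r := by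
  simp only [fvPoly, facPow, eval_prod, eval_add, eval_mul, eval_C, eval_X]
  exact Finset.prod_congr rfl fun j _ => by ring

open Polynomial in
lemma fvPoly_natDegree {K : Type*} [Field K] (β : K) (t : ℕ → K)
    (hβ : ∀ i, 1 + β * t i ≠ 0) (r : ℕ) : (fvPoly β t r).natDegree = r := by
  rw [fvPoly, Polynomial.natDegree_prod]
  · rw [Finset.sum_congr rfl fun j _ => Polynomial.natDegree_linear (hβ j)]
    simp
  · intro j _ h
    have h2 := Polynomial.natDegree_linear (a := 1 + β * t j) (b := t j) (hβ j)
    rw [h] at h2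
    simp at h2

open Polynomial in
lemma fvPoly_leadingCoeff {K : Type*} [Field K] (β : K) (t : ℕ → K)
    (hβ : ∀ i, 1 + β * t i ≠ 0) (r : ℕ) :
    (fvPoly β t r).leadingCoeff = ∏ j ∈ Finset.range r, (1 + β * t j) := by
  rw [fvPoly, Polynomial.leadingCoeff_prod]
  exact Finset.prod_congr rfl fun j _ => Polynomial.leadingCoeff_linear (hβ j)

lemma aux_prod_prod {M : Type*} [CommMonoid M] (f : ℕ → M) :
    ∀ n : ℕ, ∏ i ∈ Finset.range n, ∏ j ∈ Finset.range i, f j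
      = ∏ j ∈ Finset.range n, f j ^ (n - 1 - j)
  | 0 => by simp
  | n + 1 => by
    rw [Finset.prod_range_succ, aux_prod_prod f n]
    rw [show (∏ j ∈ Finset.range (n + 1), f j ^ (n + 1 - 1 - j))
        = ∏ j ∈ Finset.range (n + 1), f j ^ (n - j) from
      Finset.prod_congr rfl fun j _ => by norm_num]
    rw [Finset.prod_range_succ (fun j => f j ^ (n - j)), Nat.sub_self, pow_zero, mul_one,
      ← Finset.prod_mul_distrib]
    refine Finset.prod_congr rfl fun j hj => ?_
    rw [Finset.mem_range] at hj
    rw [← pow_succ]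
    congr 1
    omega

lemma prod_Ioi_eq_prod_filter {M : Type*} [CommMonoid M] {n : ℕ} (f : Fin n → Fin n → M) :
    (∏ i : Fin n, ∏ j ∈ Finset.Ioi i, f i j)
      = ∏ p ∈ Finset.univ.filter (fun p : Fin n × Fin n => p.1 < p.2), f p.1 p.2 := by
  rw [Finset.prod_sigma']
  refine Finset.prod_nbij' (fun a => (a.1, a.2)) (fun p => ⟨p.1, p.2⟩) ?_ ?_ ?_ ?_ ?_ <;>
    simp [Finset.mem_sigma]

/-- The determinant `det[(x_j|t)^{n-i}]_{1≤i,j≤n}` equals the Vandermonde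
determinant `∏_{i<j}(x_i - x_j)` times `∏_{i=1}^n (1+β t_i)^{n-i}`. -/
theorem factorial_vandermonde {K : Type*} [Field K] (n : ℕ) (β : K)
    (x : Fin n → K) (t : ℕ → K) (hβ : ∀ i, 1 + β * t i ≠ 0) :
    Matrix.det (Matrix.of fun i j : Fin n => facPow β t (x j) (n - 1 - i.val))
      = (∏ p ∈ Finset.univ.filter (fun p : Fin n × Fin n => p.1 < p.2),
          (x p.1 - x p.2)) * ∏ i : Fin n, (1 + β * t i) ^ (n - 1 - i.val) := by
  classical
  set y : Fin n → K := fun i => x (Fin.rev i) with hy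
  have hM : (Matrix.of fun i j : Fin n => facPow β t (x j) (n - 1 - i.val)) =
      ((Matrix.of fun i j : Fin n => ((fvPoly β t j.val).eval (y i)))ᵀ).submatrix
        Fin.revPerm Fin.revPerm := by
    ext i j
    simp only [Matrix.submatrix_apply, Matrix.transpose_apply, Matrix.of_apply, hy,
      Fin.revPerm_apply, Fin.rev_rev, fvPoly_eval]
    congr 1
    rw [Fin.val_rev]
    omega
  rw [hM, Matrix.det_submatrix_equiv_self, Matrix.det_transpose,
    Matrix.eval_matrixOfPolynomials_eq_vandermonde_mul_matrixOfPolynomials y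
      (fun j => fvPoly β t j.val) (fun j => le_of_eq (fvPoly_natDegree β t hβ j.val)),
    Matrix.det_mul, Matrix.det_vandermonde,
    Matrix.det_of_upperTriangular
      (Matrix.matrixOfPolynomials_blockTriangular _
        (fun j => le_of_eq (fvPoly_natDegree β t hβ j.val)))]
  congr 1
  · -- Vandermonde part
    rw [prod_Ioi_eq_prod_filter (fun i j => y j - y i)]
    refine Finset.prod_nbij' (fun p : Fin n × Fin n => (Fin.rev p.2, Fin.rev p.1))
      (fun p : Fin n × Fin n => (Fin.rev p.2, Fin.rev p.1)) ?_ ?_ ?_ ?_ ?_ <;>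
      simp [Fin.rev_lt_rev, hy, Fin.rev_rev]
  · -- coefficient part
    have hdiag : ∀ i : Fin n,
        (Matrix.of fun i j : Fin n => (fvPoly β t (j : ℕ)).coeff (i : ℕ)) i i
          = ∏ j ∈ Finset.range i.val, (1 + β * t j) := by
      intro i
      have h1 : (fvPoly β t i.val).coeff i.val = (fvPoly β t i.val).leadingCoeff := by
        rw [Polynomial.leadingCoeff, fvPoly_natDegree β t hβ]
      simp only [Matrix.of_apply, h1, fvPoly_leadingCoeff β t hβ]
    rw [Finset.prod_congr rfl fun i _ => hdiag i]
    have h2 : (∏ i : Fin n, ∏ j ∈ Finset.range i.val, (1 + β * t j))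
        = ∏ i ∈ Finset.range n, ∏ j ∈ Finset.range i, (1 + β * t j) :=
      Fin.prod_univ_eq_prod_range (fun i => ∏ j ∈ Finset.range i, (1 + β * t j)) n
    have h3 : (∏ i : Fin n, (1 + β * t i) ^ (n - 1 - i.val))
        = ∏ i ∈ Finset.range n, (1 + β * t i) ^ (n - 1 - i) :=
      Fin.prod_univ_eq_prod_range (fun i => (1 + β * t i) ^ (n - 1 - i)) n
    rw [h2, h3, aux_prod_prod]
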